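/- arXiv:1902.05190 — 6 statements merged into one kernel-verified Lean document; each statement's English description precedes it below -/
import Mathlib

section
/- Let A₊, A₋ > 0 and γ ≥ Γ > 1. Suppose ρ₊, ρ₋ > 0 satisfy A₊ρ₊^γ = A₋ρ₋^Γ, α ∈ [0,1], ρ = αρ₊, n = (1-α)ρ₋. Then there exists a constant c₀ > 0, depending only on A₊, A₋, γ, Γ, such that ρ₋ ≤ 2n + 2c₀ ρ^(γ/Γ). -/
/-- Upper bound `ρ₋ ≤ 2n + 2c₀ ρ^(γ/Γ)` with a constant `c₀ > 0`
depending only on `A₊, A₋, γ, Γ`, for the two-fluid pressure law. -/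
theorem stmt_1 (Ap Am Γ γ : ℝ)
    (hAp : 0 < Ap) (hAm : 0 < Am) (hΓ : 1 < Γ) (hγ : 1 < γ) (hΓγ : Γ ≤ γ) :
    ∃ c₀ : ℝ, 0 < c₀ ∧ ∀ α ρp ρm ρ n : ℝ,
      0 < ρp → 0 < ρm → Ap * ρp ^ γ = Am * ρm ^ Γ →
      0 ≤ α → α ≤ 1 → ρ = α * ρp → n = (1 - α) * ρm →
      ρm ≤ 2 * n + 2 * c₀ * ρ ^ (γ / Γ) := by
  have hΓ0 : (0:ℝ) < Γ := by linarith
  refine ⟨(Ap / Am) ^ (1 / Γ) * 2 ^ (γ / Γ), ?_, ?_⟩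
  · positivity
  intro α ρp ρm ρ n hρp hρm hP hα0 hα1 hρ hn
  have he0 : 0 < γ / Γ := by positivity
  -- express ρm via ρp
  have hρmΓ : ρm ^ Γ = (Ap / Am) * ρp ^ γ := by
    field_simp
    linarith [hP]
  have hρm_eq : ρm = (Ap / Am) ^ (1 / Γ) * ρp ^ (γ / Γ) := by
    have h1 : (ρm ^ Γ) ^ (1 / Γ) = ρm := by
      rw [← Real.rpow_mul hρm.le, mul_one_div, div_self hΓ0.ne', Real.rpow_one]
    rw [← h1, hρmΓ, Real.mul_rpow (by positivity) (by positivity),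
      ← Real.rpow_mul hρp.le, mul_one_div]
  rcases le_or_gt α (1/2) with hhalf | hhalf
  · -- ρm ≤ 2 n
    have h2n : ρm ≤ 2 * n := by
      rw [hn]; nlinarith
    have : 0 ≤ 2 * ((Ap / Am) ^ (1 / Γ) * 2 ^ (γ / Γ)) * ρ ^ (γ / Γ) := by
      have hρ0 : 0 ≤ ρ := by rw [hρ]; positivity
      positivity
    linarith
  · -- ρp ≤ 2 ρ
    have hρ0 : 0 < ρ := by rw [hρ]; positivity
    have hρp2 : ρp ≤ 2 * ρ := by rw [hρ]; nlinarith
    have hpow : ρp ^ (γ / Γ) ≤ (2 * ρ) ^ (γ / Γ) :=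
      Real.rpow_le_rpow hρp.le hρp2 he0.le
    have h2 : (2 * ρ) ^ (γ / Γ) = 2 ^ (γ / Γ) * ρ ^ (γ / Γ) :=
      Real.mul_rpow (by norm_num) hρ0.le
    have hn0 : 0 ≤ n := by rw [hn]; nlinarith
    have hc : ρm ≤ (Ap / Am) ^ (1 / Γ) * 2 ^ (γ / Γ) * ρ ^ (γ / Γ) := by
      rw [hρm_eq]
      calc (Ap / Am) ^ (1 / Γ) * ρp ^ (γ / Γ)
          ≤ (Ap / Am) ^ (1 / Γ) * ((2:ℝ) ^ (γ / Γ) * ρ ^ (γ / Γ)) := by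
            rw [← h2]; exact mul_le_mul_of_nonneg_left hpow (by positivity)
        _ = (Ap / Am) ^ (1 / Γ) * 2 ^ (γ / Γ) * ρ ^ (γ / Γ) := by ring
    nlinarith [Real.rpow_pos_of_pos hρ0 (γ / Γ), Real.rpow_pos_of_pos (div_pos hAp hAm) (1/Γ), Real.rpow_pos_of_pos (show (0:ℝ)<2 by norm_num) (γ/Γ)]
end

section
/- Let A₊, A₋ > 0 and γ ≥ Γ > 1. For ρ₊, ρ₋ > 0 with A₊ρ₊^γ = A₋ρ₋^Γ, α ∈ [0,1], ρ = αρ₊, n = (1-α)ρ₋, and P = A₊ρ₊^γ, there exists a constant C₀ ≥ 1 depending only on A₊, A₋, γ, Γ such that (1/C₀)(n^Γ + ρ^γ) ≤ P ≤ C₀(n^Γ + ρ^γ). -/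
/-- Pressure equivalence `(1/C₀)(n^Γ + ρ^γ) ≤ P ≤ C₀(n^Γ + ρ^γ)`
for the implicit two-fluid pressure `P = A₊ρ₊^γ = A₋ρ₋^Γ`, `ρ = αρ₊`, `n = (1-α)ρ₋`. -/
theorem stmt_2 (Ap Am Γ γ : ℝ)
    (hAp : 0 < Ap) (hAm : 0 < Am) (hΓ : 1 < Γ) (hγ : 1 < γ) (hΓγ : Γ ≤ γ) :
    ∃ C₀ : ℝ, 1 ≤ C₀ ∧ ∀ α ρp ρm ρ n : ℝ,
      0 < ρp → 0 < ρm → Ap * ρp ^ γ = Am * ρm ^ Γ →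
      0 ≤ α → α ≤ 1 → ρ = α * ρp → n = (1 - α) * ρm →
      (1 / C₀) * (n ^ Γ + ρ ^ γ) ≤ Ap * ρp ^ γ ∧
        Ap * ρp ^ γ ≤ C₀ * (n ^ Γ + ρ ^ γ) := by
  have h2γ : (0:ℝ) < (2:ℝ) ^ γ := Real.rpow_pos_of_pos (by norm_num) γ
  have h2Γ : (0:ℝ) < (2:ℝ) ^ Γ := Real.rpow_pos_of_pos (by norm_num) Γ
  set C₀ : ℝ := 1 + 1/Ap + 1/Am + Ap * 2 ^ γ + Am * 2 ^ Γ with hC₀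
  have hC₀pos : 0 < C₀ := by positivity
  have hC₀1 : 1 ≤ C₀ := by
    have h1 : 0 < 1/Ap := by positivity
    have h2 : 0 < 1/Am := by positivity
    have h3 : 0 < Ap * 2 ^ γ := by positivity
    have h4 : 0 < Am * 2 ^ Γ := by positivity
    rw [hC₀]; linarith
  refine ⟨C₀, hC₀1, ?_⟩
  intro α ρp ρm ρ n hρp hρm hPeq hα0 hα1 hρ hn
  have hγ0 : 0 ≤ γ := by linarith
  have hΓ0 : 0 ≤ Γ := by linarith
  have h1α : 0 ≤ 1 - α := by linarith
  have hρpγ : 0 < ρp ^ γ := Real.rpow_pos_of_pos hρp γ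
  have hρmΓ : 0 < ρm ^ Γ := Real.rpow_pos_of_pos hρm Γ
  have hργ : ρ ^ γ = α ^ γ * ρp ^ γ := by
    rw [hρ, Real.mul_rpow hα0 hρp.le]
  have hnΓ : n ^ Γ = (1 - α) ^ Γ * ρm ^ Γ := by
    rw [hn, Real.mul_rpow h1α hρm.le]
  have hαγ1 : α ^ γ ≤ 1 := Real.rpow_le_one hα0 hα1 hγ0
  have h1αΓ1 : (1 - α) ^ Γ ≤ 1 := Real.rpow_le_one h1α (by linarith) hΓ0
  have hαγ0 : 0 ≤ α ^ γ := Real.rpow_nonneg hα0 γ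
  have h1αΓ0 : 0 ≤ (1 - α) ^ Γ := Real.rpow_nonneg h1α Γ
  -- lower bound: n^Γ + ρ^γ ≤ C₀ * P
  have hsum : n ^ Γ + ρ ^ γ ≤ (1/Am) * (Am * ρm ^ Γ) + (1/Ap) * (Ap * ρp ^ γ) := by
    rw [hργ, hnΓ]
    have e1 : (1/Am) * (Am * ρm ^ Γ) = ρm ^ Γ := by field_simp
    have e2 : (1/Ap) * (Ap * ρp ^ γ) = ρp ^ γ := by field_simp
    rw [e1, e2]
    nlinarith
  have hP : 0 < Ap * ρp ^ γ := by positivity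
  constructor
  · rw [one_div, inv_mul_le_iff₀ hC₀pos]
    have : (1/Am) * (Am * ρm ^ Γ) + (1/Ap) * (Ap * ρp ^ γ)
        = (1/Am + 1/Ap) * (Ap * ρp ^ γ) := by rw [← hPeq]; ring
    rw [this] at hsum
    have hle : 1/Am + 1/Ap ≤ C₀ := by
      have h3 : 0 < Ap * 2 ^ γ := by positivity
      have h4 : 0 < Am * 2 ^ Γ := by positivity
      rw [hC₀]; linarith
    calc n ^ Γ + ρ ^ γ ≤ (1/Am + 1/Ap) * (Ap * ρp ^ γ) := hsum
      _ ≤ C₀ * (Ap * ρp ^ γ) := by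
          exact mul_le_mul_of_nonneg_right hle hP.le
  · -- upper bound
    have hnρ0 : 0 ≤ n ^ Γ + ρ ^ γ := by
      rw [hργ, hnΓ]; positivity
    rcases le_or_gt α (1/2) with hc | hc
    · -- 1 - α ≥ 1/2
      have hhalf : ((2:ℝ)⁻¹) ^ Γ ≤ (1 - α) ^ Γ := by
        apply Real.rpow_le_rpow (by norm_num) (by linarith) hΓ0
      have hmul : (2:ℝ) ^ Γ * ((2:ℝ)⁻¹) ^ Γ = 1 := by
        rw [← Real.mul_rpow (by norm_num) (by norm_num)]
        norm_num
      have key : Am * ρm ^ Γ ≤ Am * 2 ^ Γ * n ^ Γ := by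
        have h1 : ((2:ℝ)⁻¹) ^ Γ * ρm ^ Γ ≤ (1 - α) ^ Γ * ρm ^ Γ :=
          mul_le_mul_of_nonneg_right hhalf hρmΓ.le
        have h2 : ρm ^ Γ = 2 ^ Γ * (((2:ℝ)⁻¹) ^ Γ * ρm ^ Γ) := by
          rw [← mul_assoc, hmul, one_mul]
        calc Am * ρm ^ Γ = Am * (2 ^ Γ * (((2:ℝ)⁻¹) ^ Γ * ρm ^ Γ)) := by rw [← h2]
          _ ≤ Am * (2 ^ Γ * ((1 - α) ^ Γ * ρm ^ Γ)) := by
              exact mul_le_mul_of_nonneg_left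
                (mul_le_mul_of_nonneg_left h1 h2Γ.le) hAm.le
          _ = Am * 2 ^ Γ * n ^ Γ := by rw [hnΓ]; ring
      have hle : Am * 2 ^ Γ ≤ C₀ := by
        have h1 : 0 < 1/Ap := by positivity
        have h2 : 0 < 1/Am := by positivity
        have h3 : 0 < Ap * 2 ^ γ := by positivity
        rw [hC₀]; linarith
      have hn0 : 0 ≤ n ^ Γ := by rw [hnΓ]; positivity
      have hρ0 : 0 ≤ ρ ^ γ := by rw [hργ]; positivity
      calc Ap * ρp ^ γ = Am * ρm ^ Γ := hPeq
        _ ≤ Am * 2 ^ Γ * n ^ Γ := key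
        _ ≤ C₀ * n ^ Γ := mul_le_mul_of_nonneg_right hle hn0
        _ ≤ C₀ * (n ^ Γ + ρ ^ γ) := by
            apply mul_le_mul_of_nonneg_left _ hC₀pos.le; linarith
    · -- α > 1/2
      have hhalf : ((2:ℝ)⁻¹) ^ γ ≤ α ^ γ := by
        apply Real.rpow_le_rpow (by norm_num) (by linarith) hγ0
      have hmul : (2:ℝ) ^ γ * ((2:ℝ)⁻¹) ^ γ = 1 := by
        rw [← Real.mul_rpow (by norm_num) (by norm_num)]
        norm_num
      have key : Ap * ρp ^ γ ≤ Ap * 2 ^ γ * ρ ^ γ := by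
        have h1 : ((2:ℝ)⁻¹) ^ γ * ρp ^ γ ≤ α ^ γ * ρp ^ γ :=
          mul_le_mul_of_nonneg_right hhalf hρpγ.le
        have h2 : ρp ^ γ = 2 ^ γ * (((2:ℝ)⁻¹) ^ γ * ρp ^ γ) := by
          rw [← mul_assoc, hmul, one_mul]
        calc Ap * ρp ^ γ = Ap * (2 ^ γ * (((2:ℝ)⁻¹) ^ γ * ρp ^ γ)) := by rw [← h2]
          _ ≤ Ap * (2 ^ γ * (α ^ γ * ρp ^ γ)) := by
              exact mul_le_mul_of_nonneg_left
                (mul_le_mul_of_nonneg_left h1 h2γ.le) hAp.le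
          _ = Ap * 2 ^ γ * ρ ^ γ := by rw [hργ]; ring
      have hle : Ap * 2 ^ γ ≤ C₀ := by
        have h1 : 0 < 1/Ap := by positivity
        have h2 : 0 < 1/Am := by positivity
        have h4 : 0 < Am * 2 ^ Γ := by positivity
        rw [hC₀]; linarith
      have hn0 : 0 ≤ n ^ Γ := by rw [hnΓ]; positivity
      have hρ0 : 0 ≤ ρ ^ γ := by rw [hργ]; positivity
      calc Ap * ρp ^ γ ≤ Ap * 2 ^ γ * ρ ^ γ := key
        _ ≤ C₀ * ρ ^ γ := mul_le_mul_of_nonneg_right hle hρ0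
        _ ≤ C₀ * (n ^ Γ + ρ ^ γ) := by
            apply mul_le_mul_of_nonneg_left _ hC₀pos.le; linarith
end

section
/- Let A₊, A₋ > 0, γ, Γ > 1, and let ρ₊(n,ρ) be defined implicitly for n, ρ ≥ 0 (not both zero) by A₊ρ₊^γ = A₋ρ₋^Γ and ρρ₋ + nρ₊ = ρ₊ρ₋. Then there exists a constant C depending only on A₊, A₋, γ, Γ such that ρ₊(n,ρ) ≤ C(n^(Γ/γ) + ρ) for all such (n,ρ). -/
/-!
The volume-fraction relation `ρ ρ₋ + n ρ₊ = ρ₊ ρ₋` says that one of its two left-hand terms carries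
at least half of `ρ₊ ρ₋`: either `ρ₊ ≤ 2ρ`, or `ρ₋ ≤ 2n`. In the second case the pressure law
`A₊ ρ₊^γ = A₋ ρ₋^Γ` turns the bound on `ρ₋` into `ρ₊ ≤ (2^Γ A₋ / A₊)^(1/γ) n^(Γ/γ)`.
-/

open Real

lemma le_two_mul_or_le_two_mul_of_mul_add_mul_eq {ρ n ρp ρm : ℝ} (hρp : 0 < ρp) (hρm : 0 < ρm)
    (h : ρ * ρm + n * ρp = ρp * ρm) : ρp ≤ 2 * ρ ∨ ρm ≤ 2 * n := by
  by_contra! hlt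
  nlinarith [mul_lt_mul_of_pos_right hlt.1 hρm, mul_lt_mul_of_pos_left hlt.2 hρp]

lemma le_rpow_inv_mul_rpow_div_of_rpow_le {x B n γ Γ : ℝ} (hx : 0 ≤ x) (hB : 0 ≤ B) (hn : 0 ≤ n)
    (hγ : 0 < γ) (h : x ^ γ ≤ B * n ^ Γ) : x ≤ B ^ γ⁻¹ * n ^ (Γ / γ) := by
  rwa [div_eq_mul_inv, rpow_mul hn, ← mul_rpow hB (rpow_nonneg hn Γ),
    le_rpow_inv_iff_of_pos hx (by positivity) hγ]

lemma le_of_pressure_eq_of_le_mul {Ap Am γ Γ c n ρp ρm : ℝ} (hAp : 0 < Ap) (hAm : 0 ≤ Am)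
    (hγ : 0 < γ) (hΓ : 0 ≤ Γ) (hc : 0 ≤ c) (hn : 0 ≤ n) (hρp : 0 ≤ ρp) (hρm : 0 ≤ ρm)
    (hpress : Ap * ρp ^ γ = Am * ρm ^ Γ) (hle : ρm ≤ c * n) :
    ρp ≤ (c ^ Γ * Am / Ap) ^ γ⁻¹ * n ^ (Γ / γ) := by
  refine le_rpow_inv_mul_rpow_div_of_rpow_le hρp (by positivity) hn hγ ?_
  have hρm_pow : ρm ^ Γ ≤ c ^ Γ * n ^ Γ := mul_rpow hc hn ▸ rpow_le_rpow hρm hle hΓ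
  calc ρp ^ γ = Am * ρm ^ Γ / Ap := by rw [← hpress]; field_simp
    _ ≤ Am * (c ^ Γ * n ^ Γ) / Ap := by gcongr
    _ = c ^ Γ * Am / Ap * n ^ Γ := by ring

/-- There is a constant `C > 0`, depending only on `A₊, A₋, γ, Γ`,
such that the implicit '+'-phase density satisfies `ρ₊ ≤ C(n^(Γ/γ) + ρ)` whenever
`n, ρ ≥ 0` are not both zero and `ρ₊, ρ₋ > 0` solve `A₊ρ₊^γ = A₋ρ₋^Γ` and
`ρρ₋ + nρ₊ = ρ₊ρ₋`. -/
theorem stmt_10 (Ap Am Γ γ : ℝ)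
    (hAp : 0 < Ap) (hAm : 0 < Am) (hΓ : 1 < Γ) (hγ : 1 < γ) :
    ∃ C : ℝ, 0 < C ∧ ∀ n ρ ρp ρm : ℝ,
      0 ≤ n → 0 ≤ ρ → ¬(n = 0 ∧ ρ = 0) → 0 < ρp → 0 < ρm →
      Ap * ρp ^ γ = Am * ρm ^ Γ → ρ * ρm + n * ρp = ρp * ρm →
      ρp ≤ C * (n ^ (Γ / γ) + ρ) := by
  set K := ((2 : ℝ) ^ Γ * Am / Ap) ^ γ⁻¹
  have hK : 0 ≤ K := by positivity
  refine ⟨2 + K, by positivity, fun n ρ ρp ρm hn hρ _ hρp hρm hpress heq => ?_⟩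
  have hnpow : 0 ≤ n ^ (Γ / γ) := rpow_nonneg hn _
  rcases le_two_mul_or_le_two_mul_of_mul_add_mul_eq hρp hρm heq with hρp2 | hρm2
  · nlinarith
  · have := le_of_pressure_eq_of_le_mul hAp hAm.le (by linarith) (by linarith) zero_le_two hn
      hρp.le hρm.le hpress hρm2
    nlinarith
end

section
/- Let A₊, A₋ > 0, γ, Γ > 1, and fix A, B ≥ 0 with A + B = 1. Define p(z) = P(Az, Bz) for z ≥ 0, where P is the two-fluid pressure with P(n,ρ) = A₊ρ₊(n,ρ)^γ and the implicit constraint. Assume the differentiation formulas ∂P/∂n = A₊γρ₊^(γ-1)·(A₋/A₊)^(1/Γ)ρ₊^(1-γ/Γ)/((γ/Γ)(1-α)+α) and ∂P/∂ρ = A₊γρ₊^(γ-1)/((γ/Γ)(1-α)+α), together with the pressure equivalence (1/C₀)(n^Γ+ρ^γ) ≤ P ≤ C₀(n^Γ+ρ^γ). Then there is a constant C₂ > 0 depending only on A₊, A₋, Γ, γ such that p'(z) ≥ C₂(A^Γ z^(Γ-1) + B^γ z^(γ-1)) for all z > 0. -/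
/-!
At `z > 0` put `n = A z`, `ρ = B z`, `r = ρ₊(n, ρ)`. Factoring `A₊ γ r^(γ-1) / D` out of
`p'(z) = A ∂ₙP + B ∂ᵨP`, where `D = (γ/Γ)(1-α) + α ≤ max (γ/Γ) 1`, leaves
`(A₋/A₊)^(1/Γ) (r^γ)^((Γ-1)/Γ) A + (r^γ)^((γ-1)/γ) B`. The lower pressure equivalence gives
`n^Γ, ρ^γ ≤ C₀ A₊ r^γ`, and raising these to the powers `(Γ-1)/Γ` and `(γ-1)/γ` bounds the two
terms below by multiples of `A^Γ z^(Γ-1)` and `B^γ z^(γ-1)`.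
-/

open Real

lemma mul_rpow_sub_one_mul {a z s : ℝ} (ha : 0 ≤ a) (hz : 0 ≤ z) (hs : s ≠ 0) :
    (a * z) ^ (s - 1) * a = a ^ s * z ^ (s - 1) := by
  have hs' : s - 1 + 1 ≠ 0 := by simpa using hs
  calc (a * z) ^ (s - 1) * a = a ^ (s - 1 + 1) * z ^ (s - 1) := by
        rw [mul_rpow ha hz, rpow_add' ha hs', rpow_one]; ring
    _ = a ^ s * z ^ (s - 1) := by rw [sub_add_cancel]

lemma rpow_le_of_rpow_le_mul {x y K s e : ℝ} (hx : 0 ≤ x) (hy : 0 ≤ y) (hK : 0 < K)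
    (he : 0 ≤ e) (h : x ^ s ≤ K * y) : K ^ (-e) * x ^ (s * e) ≤ y ^ e := by
  rw [rpow_neg hK.le, inv_mul_le_iff₀ (rpow_pos_of_pos hK e), rpow_mul hx,
    ← mul_rpow hK.le hy]
  exact rpow_le_rpow (rpow_nonneg hx s) h he

lemma rpow_mul_rpow_sub_one_le {a z y K s : ℝ} (ha : 0 ≤ a) (hz : 0 ≤ z) (hy : 0 ≤ y)
    (hK : 0 < K) (hs : 1 ≤ s) (h : (a * z) ^ s ≤ K * y) :
    K ^ (-((s - 1) / s)) * (a ^ s * z ^ (s - 1)) ≤ y ^ ((s - 1) / s) * a := by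
  have hs0 : s ≠ 0 := (zero_lt_one.trans_le hs).ne'
  have hexp : s * ((s - 1) / s) = s - 1 := by field_simp
  have key := rpow_le_of_rpow_le_mul (mul_nonneg ha hz) hy hK
    (div_nonneg (sub_nonneg.mpr hs) (zero_le_one.trans hs)) h
  rw [hexp] at key
  rw [← mul_rpow_sub_one_mul ha hz hs0, ← mul_assoc]
  exact mul_le_mul_of_nonneg_right key ha

lemma min_le_mul_one_sub_add {a α : ℝ} (h0 : 0 ≤ α) (h1 : α ≤ 1) :
    min a 1 ≤ a * (1 - α) + α := by
  rcases le_total a 1 with h | h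
  · rw [min_eq_left h]; nlinarith
  · rw [min_eq_right h]; nlinarith

lemma mul_one_sub_add_le_max {a α : ℝ} (h0 : 0 ≤ α) (h1 : α ≤ 1) :
    a * (1 - α) + α ≤ max a 1 := by
  rcases le_total a 1 with h | h
  · rw [max_eq_right h]; nlinarith
  · rw [max_eq_left h]; nlinarith

lemma min_mul_add_le {a b x y : ℝ} (hx : 0 ≤ x) (hy : 0 ≤ y) :
    min a b * (x + y) ≤ a * x + b * y := by
  nlinarith [min_le_left a b, min_le_right a b]

/-- The constant `C₂`, with `C₀ A₊` the comparison constant between `n^Γ`, `ρ^γ` and `ρ₊^γ`. -/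
noncomputable def pressureDerivConst (Ap Am Γ γ C₀ : ℝ) : ℝ :=
  Ap * γ / max (γ / Γ) 1 *
    min ((Am / Ap) ^ (1 / Γ) * (C₀ * Ap) ^ (-((Γ - 1) / Γ))) ((C₀ * Ap) ^ (-((γ - 1) / γ)))

section TwoFluid

variable {Ap Am Γ γ C₀ : ℝ}

lemma pressureDerivConst_pos (hAp : 0 < Ap) (hAm : 0 < Am) (hγ : 0 < γ)
    (hC₀ : 0 < C₀) : 0 < pressureDerivConst Ap Am Γ γ C₀ := by
  unfold pressureDerivConst
  have hK : 0 < C₀ * Ap := mul_pos hC₀ hAp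
  have hcn : 0 < (Am / Ap) ^ (1 / Γ) := rpow_pos_of_pos (div_pos hAm hAp) _
  have hM₁ := rpow_pos_of_pos hK (-((Γ - 1) / Γ))
  have hM₂ := rpow_pos_of_pos hK (-((γ - 1) / γ))
  have hmax : 0 < max (γ / Γ) 1 := lt_max_of_lt_right one_pos
  exact mul_pos (div_pos (mul_pos hAp hγ) hmax) (lt_min (mul_pos hcn hM₁) hM₂)

lemma pressureDerivConst_mul_le {A B z r α : ℝ} (hAp : 0 < Ap) (hAm : 0 ≤ Am) (hΓ : 1 < Γ)
    (hγ : 1 < γ) (hC₀ : 0 < C₀) (hA : 0 ≤ A) (hB : 0 ≤ B) (hz : 0 < z) (hr : 0 < r)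
    (hα₀ : 0 ≤ α) (hα₁ : α ≤ 1)
    (hequiv : (1 / C₀) * ((A * z) ^ Γ + (B * z) ^ γ) ≤ Ap * r ^ γ) :
    pressureDerivConst Ap Am Γ γ C₀ * (A ^ Γ * z ^ (Γ - 1) + B ^ γ * z ^ (γ - 1)) ≤
      Ap * γ * r ^ (γ - 1) * ((Am / Ap) ^ (1 / Γ) * r ^ (1 - γ / Γ)) /
          ((γ / Γ) * (1 - α) + α) * A +
        Ap * γ * r ^ (γ - 1) / ((γ / Γ) * (1 - α) + α) * B := by
  set D := (γ / Γ) * (1 - α) + α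
  set cn := (Am / Ap) ^ (1 / Γ)
  set K := C₀ * Ap
  have hK : 0 < K := mul_pos hC₀ hAp
  have hcn : 0 ≤ cn := rpow_nonneg (div_nonneg hAm hAp.le) _
  have hD : 0 < D :=
    (lt_min (by positivity) one_pos).trans_le (min_le_mul_one_sub_add hα₀ hα₁)
  have hsum : (A * z) ^ Γ + (B * z) ^ γ ≤ K * r ^ γ := by
    rw [one_div_mul_eq_div, div_le_iff₀ hC₀] at hequiv
    linarith
  have hnΓ := rpow_nonneg (mul_nonneg hA hz.le) Γ
  have hργ := rpow_nonneg (mul_nonneg hB hz.le) γ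
  have hr₀ := rpow_nonneg hr.le γ
  have hn := rpow_mul_rpow_sub_one_le hA hz.le hr₀ hK hΓ.le (by linarith)
  have hρ := rpow_mul_rpow_sub_one_le hB hz.le hr₀ hK hγ.le (by linarith)
  have hrΓ : (r ^ γ) ^ ((Γ - 1) / Γ) = r ^ (γ - 1) * r ^ (1 - γ / Γ) := by
    rw [← rpow_mul hr.le, ← rpow_add hr]
    congr 1
    field_simp
    ring
  have hrγ : (r ^ γ) ^ ((γ - 1) / γ) = r ^ (γ - 1) := by
    rw [← rpow_mul hr.le]
    congr 1
    field_simp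
  calc pressureDerivConst Ap Am Γ γ C₀ * (A ^ Γ * z ^ (Γ - 1) + B ^ γ * z ^ (γ - 1))
      = Ap * γ / max (γ / Γ) 1 *
          (min (cn * K ^ (-((Γ - 1) / Γ))) (K ^ (-((γ - 1) / γ))) *
            (A ^ Γ * z ^ (Γ - 1) + B ^ γ * z ^ (γ - 1))) := by
        unfold pressureDerivConst; ring
    _ ≤ Ap * γ / D * (cn * (K ^ (-((Γ - 1) / Γ)) * (A ^ Γ * z ^ (Γ - 1))) +
          K ^ (-((γ - 1) / γ)) * (B ^ γ * z ^ (γ - 1))) := by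
        rw [← mul_assoc cn]
        gcongr ?_ * ?_
        · exact div_le_div_of_nonneg_left (by positivity) hD (mul_one_sub_add_le_max hα₀ hα₁)
        · exact min_mul_add_le (by positivity) (by positivity)
    _ ≤ Ap * γ / D * (cn * ((r ^ γ) ^ ((Γ - 1) / Γ) * A) + (r ^ γ) ^ ((γ - 1) / γ) * B) := by
        gcongr
    _ = _ := by rw [hrΓ, hrγ]; ring

end TwoFluid

theorem stmt_11_general (Ap Am Γ γ C₀ : ℝ)
    (hAp : 0 < Ap) (hAm : 0 < Am) (hΓ : 1 < Γ) (hγ : 1 < γ) (hC₀ : 1 ≤ C₀)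
    (ρplus alp : ℝ → ℝ → ℝ) (Pn Pρ : ℝ → ℝ → ℝ)
    (A B : ℝ) (hA : 0 ≤ A) (hB : 0 ≤ B) (hAB : A + B = 1)
    (p : ℝ → ℝ)
    (hρplus : ∀ n ρ : ℝ, 0 ≤ n → 0 ≤ ρ → 0 < n + ρ → 0 < ρplus n ρ)
    (halp : ∀ n ρ : ℝ, 0 ≤ n → 0 ≤ ρ → 0 < n + ρ →
      0 ≤ alp n ρ ∧ alp n ρ ≤ 1)
    (hPn : ∀ n ρ : ℝ, 0 ≤ n → 0 ≤ ρ → 0 < n + ρ →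
      Pn n ρ = Ap * γ * (ρplus n ρ) ^ (γ - 1) *
        ((Am / Ap) ^ (1 / Γ) * (ρplus n ρ) ^ (1 - γ / Γ)) /
          ((γ / Γ) * (1 - alp n ρ) + alp n ρ))
    (hPρ : ∀ n ρ : ℝ, 0 ≤ n → 0 ≤ ρ → 0 < n + ρ →
      Pρ n ρ = Ap * γ * (ρplus n ρ) ^ (γ - 1) /
        ((γ / Γ) * (1 - alp n ρ) + alp n ρ))
    (hequiv : ∀ n ρ : ℝ, 0 ≤ n → 0 ≤ ρ → 0 < n + ρ →
      (1 / C₀) * (n ^ Γ + ρ ^ γ) ≤ Ap * (ρplus n ρ) ^ γ ∧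
        Ap * (ρplus n ρ) ^ γ ≤ C₀ * (n ^ Γ + ρ ^ γ))
    (hchain : ∀ z : ℝ, 0 < z →
      HasDerivAt p (Pn (A * z) (B * z) * A + Pρ (A * z) (B * z) * B) z) :
    ∃ C₂ : ℝ, 0 < C₂ ∧ ∀ z : ℝ, 0 < z →
      C₂ * (A ^ Γ * z ^ (Γ - 1) + B ^ γ * z ^ (γ - 1)) ≤ deriv p z := by
  have hC₀' : 0 < C₀ := by linarith
  refine ⟨pressureDerivConst Ap Am Γ γ C₀,
    pressureDerivConst_pos hAp hAm (by linarith) hC₀', fun z hz => ?_⟩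
  have hn : 0 ≤ A * z := mul_nonneg hA hz.le
  have hρ : 0 ≤ B * z := mul_nonneg hB hz.le
  have hsum : 0 < A * z + B * z := by rwa [← add_mul, hAB, one_mul]
  obtain ⟨hα₀, hα₁⟩ := halp _ _ hn hρ hsum
  rw [(hchain z hz).deriv, hPn _ _ hn hρ hsum, hPρ _ _ hn hρ hsum]
  exact pressureDerivConst_mul_le hAp hAm.le hΓ hγ hC₀' hA hB hz (hρplus _ _ hn hρ hsum)
    hα₀ hα₁ (hequiv _ _ hn hρ hsum).1

/-- Let `P(n,ρ) = A₊ρ₊(n,ρ)^γ` be the implicit two-fluid pressure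
and fix `A, B ≥ 0` with `A + B = 1`. Assuming the differentiation formulas for the
partial derivatives `Pn = ∂P/∂n`, `Pρ = ∂P/∂ρ`, the chain rule for
`p(z) = P(Az, Bz)`, and the pressure equivalence
`(1/C₀)(n^Γ + ρ^γ) ≤ P ≤ C₀(n^Γ + ρ^γ)`, there is a constant `C₂ > 0` depending
only on `A₊, A₋, Γ, γ` (and `C₀`) such that
`p'(z) ≥ C₂(A^Γ z^(Γ-1) + B^γ z^(γ-1))` for all `z > 0`. -/
theorem stmt_11 (Ap Am Γ γ C₀ : ℝ)
    (hAp : 0 < Ap) (hAm : 0 < Am) (hΓ : 1 < Γ) (hγ : 1 < γ) (hC₀ : 1 ≤ C₀)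
    (ρplus alp : ℝ → ℝ → ℝ) (Pn Pρ : ℝ → ℝ → ℝ)
    (A B : ℝ) (hA : 0 ≤ A) (hB : 0 ≤ B) (hAB : A + B = 1)
    (p : ℝ → ℝ) (hp : ∀ z : ℝ, p z = Ap * (ρplus (A * z) (B * z)) ^ γ)
    (hρplus : ∀ n ρ : ℝ, 0 ≤ n → 0 ≤ ρ → 0 < n + ρ → 0 < ρplus n ρ)
    (halp : ∀ n ρ : ℝ, 0 ≤ n → 0 ≤ ρ → 0 < n + ρ →
      0 ≤ alp n ρ ∧ alp n ρ ≤ 1)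
    (hPn : ∀ n ρ : ℝ, 0 ≤ n → 0 ≤ ρ → 0 < n + ρ →
      Pn n ρ = Ap * γ * (ρplus n ρ) ^ (γ - 1) *
        ((Am / Ap) ^ (1 / Γ) * (ρplus n ρ) ^ (1 - γ / Γ)) /
          ((γ / Γ) * (1 - alp n ρ) + alp n ρ))
    (hPρ : ∀ n ρ : ℝ, 0 ≤ n → 0 ≤ ρ → 0 < n + ρ →
      Pρ n ρ = Ap * γ * (ρplus n ρ) ^ (γ - 1) /
        ((γ / Γ) * (1 - alp n ρ) + alp n ρ))
    (hequiv : ∀ n ρ : ℝ, 0 ≤ n → 0 ≤ ρ → 0 < n + ρ →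
      (1 / C₀) * (n ^ Γ + ρ ^ γ) ≤ Ap * (ρplus n ρ) ^ γ ∧
        Ap * (ρplus n ρ) ^ γ ≤ C₀ * (n ^ Γ + ρ ^ γ))
    (hchain : ∀ z : ℝ, 0 < z →
      HasDerivAt p (Pn (A * z) (B * z) * A + Pρ (A * z) (B * z) * B) z) :
    ∃ C₂ : ℝ, 0 < C₂ ∧ ∀ z : ℝ, 0 < z →
      C₂ * (A ^ Γ * z ^ (Γ - 1) + B ^ γ * z ^ (γ - 1)) ≤ deriv p z :=
  stmt_11_general Ap Am Γ γ C₀ hAp hAm hΓ hγ hC₀ ρplus alp Pn Pρ A B hA hB hAB p hρplus halp hPn hPρ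
    hequiv hchain
end

section
/- Let Q ⊆ ℝᴺ be a measurable set of finite measure, and let p, G : I → ℝ be nondecreasing continuous functions on an interval I ⊆ ℝ. Suppose (ϱ_n) is a sequence of measurable functions Q → I such that p(ϱ_n) ⇀ P̄, G(ϱ_n) ⇀ Ḡ, and p(ϱ_n)G(ϱ_n) ⇀ H̄ weakly in L¹(Q). Then P̄·Ḡ ≤ H̄ almost everywhere on Q. -/
/-!
For `s ∈ I` the functions `(p(ϱₙ) - p(s)) (G(ϱₙ) - G(s))` are nonnegative by monotonicity, so
their weak limit `H̄ - G(s) P̄ - p(s) Ḡ + p(s) G(s)` is nonnegative a.e., that is,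
`P̄ Ḡ - H̄ ≤ (P̄ - p(s)) (Ḡ - G(s))`. By continuity of `p` and `G` it suffices to let `s` run
through a countable dense subset of `I`, so a.e. this holds for all `s` at once.

On the other hand `P̄ + Ḡ` is the weak limit of functions with values in the interval
`(p + G)(I)`, so it lies a.e. in its closure. Choosing `s` with `p(s) + G(s)` close to `P̄ + Ḡ`,
AM–GM bounds the right-hand side by `((P̄ + Ḡ) - (p(s) + G(s)))² / 4`, which is arbitrarily small.
-/

open MeasureTheory Filter Topology

lemma MeasureTheory.Integrable.mul_of_measurable_bdd {X : Type*} [MeasurableSpace X]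
    {μ : Measure X} {u φ : X → ℝ} (hu : Integrable u μ) (hφ : Measurable φ)
    (hφC : ∃ C : ℝ, ∀ x, |φ x| ≤ C) : Integrable (fun x => u x * φ x) μ :=
  let ⟨C, hC⟩ := hφC
  hu.mul_bdd (c := C) hφ.aestronglyMeasurable (Eventually.of_forall hC)

structure TendstoWeaklyInL1 {X ι : Type*} [MeasurableSpace X] (μ : Measure X)
    (f : ι → X → ℝ) (l : Filter ι) (g : X → ℝ) : Prop where
  integrable : ∀ i, Integrable (f i) μ
  integrable_limit : Integrable g μ
  tendsto_integral_mul : ∀ φ : X → ℝ, Measurable φ → (∃ C : ℝ, ∀ x, |φ x| ≤ C) →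
    Tendsto (fun i => ∫ x, f i x * φ x ∂μ) l (𝓝 (∫ x, g x * φ x ∂μ))

namespace TendstoWeaklyInL1

variable {X ι : Type*} [MeasurableSpace X] {μ : Measure X} {l : Filter ι}
  {f f' : ι → X → ℝ} {g g' : X → ℝ}

lemma const [IsFiniteMeasure μ] (c : ℝ) :
    TendstoWeaklyInL1 μ (fun _ _ => c) l (fun _ => c) :=
  ⟨fun _ => integrable_const c, integrable_const c, fun _ _ _ => tendsto_const_nhds⟩

lemma add (hf : TendstoWeaklyInL1 μ f l g) (hf' : TendstoWeaklyInL1 μ f' l g') :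
    TendstoWeaklyInL1 μ (fun i x => f i x + f' i x) l (fun x => g x + g' x) := by
  refine ⟨fun i => (hf.integrable i).add (hf'.integrable i),
    hf.integrable_limit.add hf'.integrable_limit, fun φ hφ hφC => ?_⟩
  have split : ∀ u v : X → ℝ, Integrable u μ → Integrable v μ →
      ∫ x, (u x + v x) * φ x ∂μ = ∫ x, u x * φ x ∂μ + ∫ x, v x * φ x ∂μ := fun u v hu hv => by
    simp_rw [add_mul]
    exact integral_add (hu.mul_of_measurable_bdd hφ hφC) (hv.mul_of_measurable_bdd hφ hφC)
  simp_rw [split _ _ (hf.integrable _) (hf'.integrable _),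
    split _ _ hf.integrable_limit hf'.integrable_limit]
  exact (hf.tendsto_integral_mul φ hφ hφC).add (hf'.tendsto_integral_mul φ hφ hφC)

lemma const_mul (hf : TendstoWeaklyInL1 μ f l g) (c : ℝ) :
    TendstoWeaklyInL1 μ (fun i x => c * f i x) l (fun x => c * g x) := by
  refine ⟨fun i => (hf.integrable i).const_mul c, hf.integrable_limit.const_mul c,
    fun φ hφ hφC => ?_⟩
  simp_rw [mul_assoc, integral_const_mul]
  exact (hf.tendsto_integral_mul φ hφ hφC).const_mul c

lemma sub (hf : TendstoWeaklyInL1 μ f l g) (hf' : TendstoWeaklyInL1 μ f' l g') :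
    TendstoWeaklyInL1 μ (fun i x => f i x - f' i x) l (fun x => g x - g' x) := by
  simpa [sub_eq_add_neg] using hf.add (hf'.const_mul (-1))

lemma ae_nonneg [l.NeBot] (hf : TendstoWeaklyInL1 μ f l g) (hf₀ : ∀ i x, 0 ≤ f i x) :
    ∀ᵐ x ∂μ, 0 ≤ g x := by
  refine ae_nonneg_of_forall_setIntegral_nonneg hf.integrable_limit fun E hE _ => ?_
  have hindicator : ∀ u : X → ℝ, ∫ x, u x * E.indicator 1 x ∂μ = ∫ x in E, u x ∂μ := fun u => by
    rw [← integral_indicator hE]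
    congr 1 with x
    by_cases hx : x ∈ E <;> simp [hx]
  have hlim := hf.tendsto_integral_mul (E.indicator 1) (measurable_const.indicator hE)
    ⟨1, fun x => by by_cases hx : x ∈ E <;> simp [hx]⟩
  simp_rw [hindicator] at hlim
  exact ge_of_tendsto hlim (Eventually.of_forall fun i =>
    setIntegral_nonneg hE fun x _ => hf₀ i x)

lemma ae_le_of_forall_le [IsFiniteMeasure μ] [l.NeBot] (hf : TendstoWeaklyInL1 μ f l g) {c : ℝ}
    (hfc : ∀ i x, f i x ≤ c) : ∀ᵐ x ∂μ, g x ≤ c := by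
  filter_upwards [((const c).sub hf).ae_nonneg fun i x => sub_nonneg.mpr (hfc i x)] with x hx
  exact sub_nonneg.mp hx

lemma ae_ge_of_forall_ge [IsFiniteMeasure μ] [l.NeBot] (hf : TendstoWeaklyInL1 μ f l g)
    {c : ℝ} (hfc : ∀ i x, c ≤ f i x) : ∀ᵐ x ∂μ, c ≤ g x := by
  filter_upwards [(hf.sub (const c)).ae_nonneg fun i x => sub_nonneg.mpr (hfc i x)] with x hx
  exact sub_nonneg.mp hx

lemma ae_mem_closure [IsFiniteMeasure μ] [l.NeBot] (hf : TendstoWeaklyInL1 μ f l g)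
    {S : Set ℝ} (hS : S.OrdConnected) (hfS : ∀ i x, f i x ∈ S) :
    ∀ᵐ x ∂μ, g x ∈ closure S := by
  obtain ⟨i⟩ := l.nonempty_of_neBot
  rcases S.eq_empty_or_nonempty with rfl | hne
  · exact Eventually.of_forall fun x => absurd (hfS i x) (Set.notMem_empty _)
  have below : ∀ᵐ x ∂μ, ∃ z ∈ closure S, z ≤ g x := by
    by_cases hb : BddBelow S
    · filter_upwards [hf.ae_ge_of_forall_ge fun i x => csInf_le hb (hfS i x)] with x hx
      exact ⟨_, csInf_mem_closure hne hb, hx⟩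
    · refine Eventually.of_forall fun x => ?_
      obtain ⟨z, hz, hzx⟩ := not_bddBelow_iff.mp hb (g x)
      exact ⟨z, subset_closure hz, hzx.le⟩
  have above : ∀ᵐ x ∂μ, ∃ w ∈ closure S, g x ≤ w := by
    by_cases hb : BddAbove S
    · filter_upwards [hf.ae_le_of_forall_le fun i x => le_csSup hb (hfS i x)] with x hx
      exact ⟨_, csSup_mem_closure hne hb, hx⟩
    · refine Eventually.of_forall fun x => ?_
      obtain ⟨w, hw, hxw⟩ := not_bddAbove_iff.mp hb (g x)
      exact ⟨w, subset_closure hw, hxw.le⟩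
  filter_upwards [below, above] with x ⟨z, hz, hzx⟩ ⟨w, hw, hxw⟩
  exact hS.isPreconnected.closure.ordConnected.out hz hw ⟨hzx, hxw⟩

lemma ae_mul_sub_le_sub_mul_sub [IsFiniteMeasure μ] [l.NeBot] {u v : ι → X → ℝ} {U V H : X → ℝ}
    (hu : TendstoWeaklyInL1 μ u l U) (hv : TendstoWeaklyInL1 μ v l V)
    (huv : TendstoWeaklyInL1 μ (fun i x => u i x * v i x) l H) {a b : ℝ}
    (hab : ∀ i x, 0 ≤ (u i x - a) * (v i x - b)) :
    ∀ᵐ x ∂μ, U x * V x - H x ≤ (U x - a) * (V x - b) := by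
  have hlim := ((huv.sub (hu.const_mul b)).sub (hv.const_mul a)).add (const (a * b))
  filter_upwards [hlim.ae_nonneg fun i x => (hab i x).trans_eq (by ring)] with x hx
  linear_combination hx

end TendstoWeaklyInL1

lemma nonpos_of_le_sub_mul_sub_of_add_mem_closure {α : Type*} {u v : α → ℝ} {s : Set α}
    {a b c : ℝ} (hab : a + b ∈ closure ((u + v) '' s))
    (hc : ∀ t ∈ s, c ≤ (a - u t) * (b - v t)) : c ≤ 0 := by
  obtain ⟨z, hz, hlim⟩ := mem_closure_iff_seq_limit.mp hab
  choose t hts hzt using hz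
  -- AM–GM: `(a - u) (b - v) ≤ ((a + b) - (u + v)) ^ 2 / 4`.
  have hbound : ∀ n, c ≤ (z n - (a + b)) ^ 2 / 4 := fun n => by
    rw [← hzt n, Pi.add_apply]
    nlinarith [hc _ (hts n), sq_nonneg ((a - u (t n)) - (b - v (t n)))]
  have hsq : Tendsto (fun n => (z n - (a + b)) ^ 2 / 4) atTop (𝓝 0) := by
    simpa using ((hlim.sub_const (a + b)).pow 2).div_const 4
  exact ge_of_tendsto' hsq hbound

theorem stmt_13_general {X : Type*} [MeasurableSpace X] (μ : Measure X) [IsFiniteMeasure μ]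
    (I : Set ℝ) (hI : I.OrdConnected)
    (p G : ℝ → ℝ)
    (hp : MonotoneOn p I) (hpc : ContinuousOn p I)
    (hG : MonotoneOn G I) (hGc : ContinuousOn G I)
    (ϱ : ℕ → X → ℝ) (hmem : ∀ n x, ϱ n x ∈ I)
    (Pbar Gbar Hbar : X → ℝ)
    (hPbar : Integrable Pbar μ) (hGbar : Integrable Gbar μ) (hHbar : Integrable Hbar μ)
    (hip : ∀ n, Integrable (fun x => p (ϱ n x)) μ)
    (hiG : ∀ n, Integrable (fun x => G (ϱ n x)) μ)
    (hipG : ∀ n, Integrable (fun x => p (ϱ n x) * G (ϱ n x)) μ)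
    (hwp : ∀ φ : X → ℝ, Measurable φ → (∃ C : ℝ, ∀ x, |φ x| ≤ C) →
      Tendsto (fun n => ∫ x, p (ϱ n x) * φ x ∂μ) atTop (𝓝 (∫ x, Pbar x * φ x ∂μ)))
    (hwG : ∀ φ : X → ℝ, Measurable φ → (∃ C : ℝ, ∀ x, |φ x| ≤ C) →
      Tendsto (fun n => ∫ x, G (ϱ n x) * φ x ∂μ) atTop (𝓝 (∫ x, Gbar x * φ x ∂μ)))
    (hwpG : ∀ φ : X → ℝ, Measurable φ → (∃ C : ℝ, ∀ x, |φ x| ≤ C) →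
      Tendsto (fun n => ∫ x, p (ϱ n x) * G (ϱ n x) * φ x ∂μ) atTop
        (𝓝 (∫ x, Hbar x * φ x ∂μ))) :
    ∀ᵐ x ∂μ, Pbar x * Gbar x ≤ Hbar x := by
  have wp : TendstoWeaklyInL1 μ (fun n x => p (ϱ n x)) atTop Pbar := ⟨hip, hPbar, hwp⟩
  have wG : TendstoWeaklyInL1 μ (fun n x => G (ϱ n x)) atTop Gbar := ⟨hiG, hGbar, hwG⟩
  have wpG : TendstoWeaklyInL1 μ (fun n x => p (ϱ n x) * G (ϱ n x)) atTop Hbar :=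
    ⟨hipG, hHbar, hwpG⟩
  obtain ⟨D, hDI, hDc, hID⟩ :=
    (TopologicalSpace.IsSeparable.of_separableSpace I).exists_countable_dense_subset
  have hsum_cont : ContinuousOn (p + G) I := hpc.add hGc
  have hclosure : closure ((p + G) '' I) ⊆ closure ((p + G) '' D) :=
    closure_minimal (Set.image_subset_iff.mpr fun s hs =>
      ((hsum_cont s hs).mono hDI).mem_closure_image (hID hs)) isClosed_closure
  have hrange : ∀ᵐ x ∂μ, Pbar x + Gbar x ∈ closure ((p + G) '' I) :=
    (wp.add wG).ae_mem_closure (hI.isPreconnected.image _ hsum_cont).ordConnected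
      fun n x => ⟨ϱ n x, hmem n x, rfl⟩
  have htest : ∀ᵐ x ∂μ, ∀ s ∈ D,
      Pbar x * Gbar x - Hbar x ≤ (Pbar x - p s) * (Gbar x - G s) :=
    (ae_ball_iff hDc).mpr fun s hs => wp.ae_mul_sub_le_sub_mul_sub wG wpG fun n x =>
      (hp.monovaryOn hG).sub_mul_sub_nonneg (hDI hs) (hmem n x)
  filter_upwards [hrange, htest] with x hx hxD
  exact sub_nonpos.mp (nonpos_of_le_sub_mul_sub_of_add_mem_closure (hclosure hx) hxD)

/-- Feireisl–Novotný, Theorem 10.19. Let `μ` be a finite measure,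
`p, G` nondecreasing continuous functions on an interval `I ⊆ ℝ`, and `ϱ_n : X → I`
measurable with `p(ϱ_n) ⇀ P̄`, `G(ϱ_n) ⇀ Ḡ`, `p(ϱ_n)G(ϱ_n) ⇀ H̄` weakly in `L¹(μ)`
(tested against bounded measurable functions). Then `P̄·Ḡ ≤ H̄` a.e. -/
theorem stmt_13 {X : Type*} [MeasurableSpace X] (μ : Measure X) [IsFiniteMeasure μ]
    (I : Set ℝ) (hI : I.OrdConnected)
    (p G : ℝ → ℝ)
    (hp : MonotoneOn p I) (hpc : ContinuousOn p I)
    (hG : MonotoneOn G I) (hGc : ContinuousOn G I)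
    (ϱ : ℕ → X → ℝ) (hmeas : ∀ n, Measurable (ϱ n)) (hmem : ∀ n x, ϱ n x ∈ I)
    (Pbar Gbar Hbar : X → ℝ)
    (hPbar : Integrable Pbar μ) (hGbar : Integrable Gbar μ) (hHbar : Integrable Hbar μ)
    (hip : ∀ n, Integrable (fun x => p (ϱ n x)) μ)
    (hiG : ∀ n, Integrable (fun x => G (ϱ n x)) μ)
    (hipG : ∀ n, Integrable (fun x => p (ϱ n x) * G (ϱ n x)) μ)
    (hwp : ∀ φ : X → ℝ, Measurable φ → (∃ C : ℝ, ∀ x, |φ x| ≤ C) →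
      Tendsto (fun n => ∫ x, p (ϱ n x) * φ x ∂μ) atTop (𝓝 (∫ x, Pbar x * φ x ∂μ)))
    (hwG : ∀ φ : X → ℝ, Measurable φ → (∃ C : ℝ, ∀ x, |φ x| ≤ C) →
      Tendsto (fun n => ∫ x, G (ϱ n x) * φ x ∂μ) atTop (𝓝 (∫ x, Gbar x * φ x ∂μ)))
    (hwpG : ∀ φ : X → ℝ, Measurable φ → (∃ C : ℝ, ∀ x, |φ x| ≤ C) →
      Tendsto (fun n => ∫ x, p (ϱ n x) * G (ϱ n x) * φ x ∂μ) atTop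
        (𝓝 (∫ x, Hbar x * φ x ∂μ))) :
    ∀ᵐ x ∂μ, Pbar x * Gbar x ≤ Hbar x :=
  stmt_13_general μ I hI p G hp hpc hG hGc ϱ hmem Pbar Gbar Hbar hPbar hGbar hHbar hip hiG hipG hwp
    hwG hwpG
end

section
/- Let A₊, A₋ > 0 and γ, Γ > 1 with γ ≥ Γ, and let ρ₊ = ρ₊(n,ρ) be the implicit '+'-phase density of the two-fluid pressure law, defined for n, ρ > 0. Then the partial derivatives satisfy ∂ρ₊/∂ρ = 1/((γ/Γ)(1-α) + α) and ∂ρ₊/∂n = (A₋/A₊)^(1/Γ)·ρ₊^(1-γ/Γ)/((γ/Γ)(1-α) + α), where α = ρ/ρ₊ ∈ (0,1). In particular both partial derivatives are positive and ∂ρ₊/∂ρ ≤ max{Γ/γ, 1}. -/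
/-- For the implicit '+'-phase density `ρ₊(n,ρ)` of the two-fluid
pressure law (`A₊ρ₊^γ = A₋ρ₋^Γ`, `ρρ₋ + nρ₊ = ρ₊ρ₋` for `n, ρ > 0`), the partial
derivatives satisfy `∂ρ₊/∂ρ = 1/((γ/Γ)(1-α)+α)` and
`∂ρ₊/∂n = (A₋/A₊)^(1/Γ) ρ₊^(1-γ/Γ)/((γ/Γ)(1-α)+α)` with `α = ρ/ρ₊ ∈ (0,1)`;
in particular both are positive and `∂ρ₊/∂ρ ≤ max{Γ/γ, 1}`. -/
theorem stmt_18 (Ap Am Γ γ : ℝ)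
    (hAp : 0 < Ap) (hAm : 0 < Am) (hΓ : 1 < Γ) (hγ : 1 < γ) (hΓγ : Γ ≤ γ)
    (ρplus ρminus : ℝ → ℝ → ℝ)
    (hpos : ∀ n ρ : ℝ, 0 < n → 0 < ρ → 0 < ρplus n ρ ∧ 0 < ρminus n ρ)
    (hlaw : ∀ n ρ : ℝ, 0 < n → 0 < ρ →
      Ap * (ρplus n ρ) ^ γ = Am * (ρminus n ρ) ^ Γ)
    (hcon : ∀ n ρ : ℝ, 0 < n → 0 < ρ →
      ρ * ρminus n ρ + n * ρplus n ρ = ρplus n ρ * ρminus n ρ)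
    (n ρ : ℝ) (hn : 0 < n) (hρ : 0 < ρ)
    (dn dρ : ℝ)
    (hdn : HasDerivAt (fun m => ρplus m ρ) dn n)
    (hdρ : HasDerivAt (fun r => ρplus n r) dρ ρ)
    (α : ℝ) (hα : α = ρ / ρplus n ρ) :
    0 < α ∧ α < 1 ∧
      dρ = 1 / ((γ / Γ) * (1 - α) + α) ∧
      dn = (Am / Ap) ^ (1 / Γ) * (ρplus n ρ) ^ (1 - γ / Γ) /
        ((γ / Γ) * (1 - α) + α) ∧
      0 < dn ∧ 0 < dρ ∧ dρ ≤ max (Γ / γ) 1 := by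
  have hΓ0 : (0:ℝ) < Γ := by linarith
  have hγ0 : (0:ℝ) < γ := by linarith
  obtain ⟨hP, hM⟩ := hpos n ρ hn hρ
  set c : ℝ := (Ap / Am) ^ (1 / Γ) with hc
  have hc0 : 0 < c := Real.rpow_pos_of_pos (div_pos hAp hAm) _
  set k : ℝ := γ / Γ with hk
  have hk1 : (1:ℝ) ≤ k := (one_le_div hΓ0).2 hΓγ
  -- ρminus in terms of ρplus
  have hMeq : ∀ m r : ℝ, 0 < m → 0 < r → ρminus m r = c * (ρplus m r) ^ k := by
    intro m r hm hr
    obtain ⟨hp, hq⟩ := hpos m r hm hr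
    have hl := hlaw m r hm hr
    have h1 : (ρminus m r) ^ Γ = (Ap / Am) * (ρplus m r) ^ γ := by
      field_simp
      linarith [hl]
    calc ρminus m r = ((ρminus m r) ^ Γ) ^ (1/Γ) := by
          rw [← Real.rpow_mul hq.le, mul_one_div, div_self hΓ0.ne', Real.rpow_one]
      _ = ((Ap / Am) * (ρplus m r) ^ γ) ^ (1/Γ) := by rw [h1]
      _ = c * (ρplus m r) ^ k := by
          rw [Real.mul_rpow (by positivity) (by positivity),
            ← Real.rpow_mul hp.le, mul_one_div]
  -- the scalar implicit equation
  have hEq : ∀ m r : ℝ, 0 < m → 0 < r →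
      c * (ρplus m r) ^ (k + 1) = r * (c * (ρplus m r) ^ k) + m * ρplus m r := by
    intro m r hm hr
    obtain ⟨hp, _⟩ := hpos m r hm hr
    have hc' := hcon m r hm hr
    rw [hMeq m r hm hr] at hc'
    have hx : (ρplus m r) ^ (k + 1) = (ρplus m r) ^ k * ρplus m r := by
      rw [Real.rpow_add hp, Real.rpow_one]
    rw [hx]
    linear_combination -hc'
  -- α ∈ (0,1)
  have hPρ : ρ < ρplus n ρ := by
    by_contra h
    push_neg at h
    nlinarith [hcon n ρ hn hρ, mul_pos hn hP,
      mul_nonneg hM.le (sub_nonneg.2 h)]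
  have hα0 : 0 < α := by rw [hα]; positivity
  have hα1 : α < 1 := by rw [hα]; exact (div_lt_one hP).2 hPρ
  -- denominator
  set D : ℝ := k * (1 - α) + α with hD
  have hD1 : 1 ≤ D := by nlinarith [mul_nonneg (sub_nonneg.2 hk1) (sub_nonneg.2 hα1.le)]
  have hD0 : 0 < D := lt_of_lt_of_le one_pos hD1
  have hDP : D * ρplus n ρ = k * (ρplus n ρ - ρ) + ρ := by
    rw [hD, hα]; field_simp
  -- shorthand
  have hY0 : 0 < (ρplus n ρ) ^ (k - 1) := Real.rpow_pos_of_pos hP _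
  have hXY : (ρplus n ρ) ^ k = (ρplus n ρ) ^ (k - 1) * ρplus n ρ := by
    rw [← Real.rpow_add_one hP.ne' (k - 1), sub_add_cancel]
  have e1 : k + 1 - 1 = k := add_sub_cancel_right k 1
  -- base equation at (n,ρ)
  have hE := hEq n ρ hn hρ
  rw [Real.rpow_add hP k 1, Real.rpow_one, hXY] at hE
  -- derivative in ρ
  have h1 : HasDerivAt (fun r => (ρplus n r) ^ (k + 1))
      (dρ * (k + 1) * (ρplus n ρ) ^ (k + 1 - 1)) ρ := hdρ.rpow_const (Or.inl hP.ne')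
  have h2 : HasDerivAt (fun r => (ρplus n r) ^ k)
      (dρ * k * (ρplus n ρ) ^ (k - 1)) ρ := hdρ.rpow_const (Or.inl hP.ne')
  have hG : HasDerivAt
      (fun r => c * (ρplus n r) ^ (k + 1) - r * (c * (ρplus n r) ^ k) - n * ρplus n r)
      (c * (dρ * (k + 1) * (ρplus n ρ) ^ (k + 1 - 1)) -
        (1 * (c * (ρplus n ρ) ^ k) + ρ * (c * (dρ * k * (ρplus n ρ) ^ (k - 1)))) -
        n * dρ) ρ :=
    ((h1.const_mul c).sub ((hasDerivAt_id ρ).mul (h2.const_mul c))).sub (hdρ.const_mul n)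
  have hG0 : (fun r => c * (ρplus n r) ^ (k + 1) - r * (c * (ρplus n r) ^ k) - n * ρplus n r)
      =ᶠ[nhds ρ] fun _ => (0:ℝ) := by
    filter_upwards [eventually_gt_nhds hρ] with r hr
    linarith [hEq n r hn hr]
  have hkey : c * (dρ * (k + 1) * (ρplus n ρ) ^ (k + 1 - 1)) -
      (1 * (c * (ρplus n ρ) ^ k) + ρ * (c * (dρ * k * (ρplus n ρ) ^ (k - 1)))) -
      n * dρ = 0 :=
    hG.unique ((hasDerivAt_const ρ (0:ℝ)).congr_of_eventuallyEq hG0)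
  rw [e1, hXY] at hkey
  -- derivative in n
  have h1' : HasDerivAt (fun m => (ρplus m ρ) ^ (k + 1))
      (dn * (k + 1) * (ρplus n ρ) ^ (k + 1 - 1)) n := hdn.rpow_const (Or.inl hP.ne')
  have h2' : HasDerivAt (fun m => (ρplus m ρ) ^ k)
      (dn * k * (ρplus n ρ) ^ (k - 1)) n := hdn.rpow_const (Or.inl hP.ne')
  have hH : HasDerivAt
      (fun m => c * (ρplus m ρ) ^ (k + 1) - ρ * (c * (ρplus m ρ) ^ k) - m * ρplus m ρ)
      (c * (dn * (k + 1) * (ρplus n ρ) ^ (k + 1 - 1)) -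
        ρ * (c * (dn * k * (ρplus n ρ) ^ (k - 1))) -
        (1 * ρplus n ρ + n * dn)) n :=
    ((h1'.const_mul c).sub ((h2'.const_mul c).const_mul ρ)).sub ((hasDerivAt_id n).mul hdn)
  have hH0 : (fun m => c * (ρplus m ρ) ^ (k + 1) - ρ * (c * (ρplus m ρ) ^ k) - m * ρplus m ρ)
      =ᶠ[nhds n] fun _ => (0:ℝ) := by
    filter_upwards [eventually_gt_nhds hn] with m hm
    linarith [hEq m ρ hm hρ]
  have hkey' : c * (dn * (k + 1) * (ρplus n ρ) ^ (k + 1 - 1)) -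
      ρ * (c * (dn * k * (ρplus n ρ) ^ (k - 1))) -
      (1 * ρplus n ρ + n * dn) = 0 :=
    hH.unique ((hasDerivAt_const n (0:ℝ)).congr_of_eventuallyEq hH0)
  rw [e1, hXY] at hkey'
  -- solve the linear equations
  have h3P : dρ * (c * ((ρplus n ρ) ^ (k - 1) * ρplus n ρ) * D) * ρplus n ρ =
      c * ((ρplus n ρ) ^ (k - 1) * ρplus n ρ) * ρplus n ρ := by
    linear_combination (ρplus n ρ) * hkey - dρ * hE +
      (dρ * c * (ρplus n ρ) ^ (k - 1) * ρplus n ρ) * hDP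
  have h3 : dρ * D = 1 := by
    have hne : (0:ℝ) < c * ((ρplus n ρ) ^ (k - 1) * ρplus n ρ) * ρplus n ρ := by positivity
    have := mul_left_cancel₀ hne.ne'
      (show (c * ((ρplus n ρ) ^ (k - 1) * ρplus n ρ) * ρplus n ρ) * (dρ * D) =
        (c * ((ρplus n ρ) ^ (k - 1) * ρplus n ρ) * ρplus n ρ) * 1 by linear_combination h3P)
    simpa using this
  have h4P : dn * (c * ((ρplus n ρ) ^ (k - 1) * ρplus n ρ) * D) * ρplus n ρ =
      ρplus n ρ * ρplus n ρ := by
    linear_combination (ρplus n ρ) * hkey' - dn * hE +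
      (dn * c * (ρplus n ρ) ^ (k - 1) * ρplus n ρ) * hDP
  have hdρval : dρ = 1 / D := by
    rw [eq_div_iff hD0.ne']; exact h3
  have hcinv : (Am / Ap) ^ (1 / Γ) = c⁻¹ := by
    rw [hc, ← Real.inv_rpow (by positivity), inv_div]
  have hP1k : (ρplus n ρ) ^ (1 - k) = ρplus n ρ / (ρplus n ρ) ^ k := by
    rw [Real.rpow_sub hP, Real.rpow_one]
  have h5 : dn * (c * ((ρplus n ρ) ^ (k - 1) * ρplus n ρ) * D) = ρplus n ρ :=
    mul_right_cancel₀ hP.ne' h4P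
  have hdnval : dn = (Am / Ap) ^ (1 / Γ) * (ρplus n ρ) ^ (1 - k) / D := by
    rw [hcinv, hP1k, hXY]
    have hrw : c⁻¹ * (ρplus n ρ / ((ρplus n ρ) ^ (k - 1) * ρplus n ρ)) / D =
        ρplus n ρ / (c * ((ρplus n ρ) ^ (k - 1) * ρplus n ρ) * D) := by
      rw [div_eq_div_iff (by positivity) (by positivity)]
      field_simp
    rw [hrw, eq_div_iff (by positivity)]
    exact h5
  refine ⟨hα0, hα1, hdρval, hdnval, ?_, ?_, ?_⟩
  · rw [hdnval]
    have : 0 < (Am / Ap) ^ (1 / Γ) * (ρplus n ρ) ^ (1 - k) := by positivity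
    positivity
  · rw [hdρval]; positivity
  · rw [hdρval]
    refine le_trans ?_ (le_max_right _ _)
    rw [div_le_one hD0]; exact hD1
end
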